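/- Let K be a field, N ≥ 2 an integer, E and E' finite-dimensional K-vector spaces, R a subspace of E^⊗N and R' a subspace of E'^⊗N. Let 𝒜 = T(E)/(R) and 𝒜' = T(E')/(R') be the quotients of the tensor algebras by the two-sided ideals generated by the images of R and R' under the canonical inclusions E^⊗N → T(E), E'^⊗N → T(E'). Let ĩ : T(E ⊗ E') → T(E) ⊗ T(E') be the unique algebra homomorphism with ĩ(e ⊗ e') = ι(e) ⊗ ι(e'), and let ĩ_N : (E ⊗ E')^⊗N → E^⊗N ⊗ E'^⊗N be its degree-N component (a linear isomorphism). Let S ⊆ (E ⊗ E')^⊗N be the preimage under ĩ_N of the subspace R ⊗ E'^⊗N + E^⊗N ⊗ R' of E^⊗N ⊗ E'^⊗N. Then the kernel of the composite algebra homomorphism T(E ⊗ E') → T(E) ⊗ T(E') → 𝒜 ⊗ 𝒜' (where the second map is the tensor product of the two quotient maps) equals the two-sided ideal of T(E ⊗ E') generated by S. Equivalently, ĩ induces an injective homomorphism of unital algebras from T(E ⊗ E')/(S) into 𝒜 ⊗ 𝒜'. -/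

import Mathlib

open TensorProduct

section Shuffle

variable (K : Type*) [CommSemiring K] {ι : Type*}
variable (M N : ι → Type*) [∀ i, AddCommMonoid (M i)] [∀ i, Module K (M i)]
  [∀ i, AddCommMonoid (N i)] [∀ i, Module K (N i)]

/-- Auxiliary map: for fixed `m`, send `⊗ᵢ nᵢ` to `⊗ᵢ (mᵢ ⊗ nᵢ)`. -/
noncomputable def shuffleAux (m : ∀ i, M i) :
    (⨂[K] i, N i) →ₗ[K] ⨂[K] i, (M i ⊗[K] N i) :=
  PiTensorProduct.lift
    ((PiTensorProduct.tprod K).compLinearMap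
      (fun i => TensorProduct.mk K (M i) (N i) (m i)))

lemma shuffleAux_tprod (m : ∀ i, M i) (n : ∀ i, N i) :
    shuffleAux K M N m (PiTensorProduct.tprod K n)
      = PiTensorProduct.tprod K (fun i => m i ⊗ₜ[K] n i) := by
  simp [shuffleAux]

/-- The shuffle map `(⨂ᵢ Mᵢ) ⊗ (⨂ᵢ Nᵢ) →ₗ ⨂ᵢ (Mᵢ ⊗ Nᵢ)` sending
`(m₁ ⊗ … ⊗ m_n) ⊗ (n₁ ⊗ … ⊗ n_n)` to `(m₁ ⊗ n₁) ⊗ … ⊗ (m_n ⊗ n_n)`.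
It is the inverse of the degree-`n` component `ĩ_n` of `ĩ`. -/
noncomputable def shuffle :
    ((⨂[K] i, M i) ⊗[K] (⨂[K] i, N i)) →ₗ[K] ⨂[K] i, (M i ⊗[K] N i) :=
  TensorProduct.lift
    (PiTensorProduct.lift
      { toFun := fun m => shuffleAux K M N m
        map_update_add' := by
          intro dec m i x y
          ext n
          have key : ∀ z : M i,
              (fun j => (Function.update m i z j) ⊗ₜ[K] n j)
                = Function.update (fun j => m j ⊗ₜ[K] n j) i (z ⊗ₜ[K] n i) := by
            intro z
            funext j
            rcases eq_or_ne j i with rfl | h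
            · simp
            · simp [Function.update_of_ne h]
          simp only [LinearMap.compMultilinearMap_apply, shuffleAux_tprod, key,
            LinearMap.add_apply]
          rw [add_tmul]
          exact (PiTensorProduct.tprod K).map_update_add _ i _ _
        map_update_smul' := by
          intro dec m i c x
          ext n
          have key : ∀ z : M i,
              (fun j => (Function.update m i z j) ⊗ₜ[K] n j)
                = Function.update (fun j => m j ⊗ₜ[K] n j) i (z ⊗ₜ[K] n i) := by
            intro z
            funext j
            rcases eq_or_ne j i with rfl | h
            · simp
            · simp [Function.update_of_ne h]
          simp only [LinearMap.compMultilinearMap_apply, shuffleAux_tprod, key,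
            LinearMap.smul_apply]
          rw [← smul_tmul']
          exact (PiTensorProduct.tprod K).map_update_smul _ i _ _ })

end Shuffle

section HomogeneousAlgebra

variable (K : Type*) [Field K] (V : Type*) [AddCommGroup V] [Module K V]

/-- The relation on `T(V)` whose induced ring congruence identifies `x ~ y` iff
`x - y` lies in the two-sided ideal generated by (the canonical image of) `R ⊆ V^⊗N`. -/
def homRel {N : ℕ} (R : Submodule K (⨂[K]^N V)) :
    TensorAlgebra K V → TensorAlgebra K V → Prop :=
  fun x y => x ∈ Submodule.map (TensorPower.toTensorAlgebra (R := K) (M := V) (n := N)) R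
    ∧ y = 0

/-- The `N`-homogeneous algebra `A(V, R) = T(V)/(R)`. -/
noncomputable abbrev HomAlg {N : ℕ} (R : Submodule K (⨂[K]^N V)) : Type _ :=
  RingQuot (homRel K V R)

/-- The quotient map `T(V) → A(V, R)`. -/
noncomputable def homQuot {N : ℕ} (R : Submodule K (⨂[K]^N V)) :
    TensorAlgebra K V →ₐ[K] HomAlg K V R :=
  RingQuot.mkAlgHom K (homRel K V R)

end HomogeneousAlgebra

/-- The canonical algebra homomorphism `ĩ : T(E ⊗ E') → T(E) ⊗ T(E')` determined by
`ĩ(e ⊗ e') = ι(e) ⊗ ι(e')`. -/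
noncomputable def tildeI (K : Type*) [CommRing K] (E E' : Type*)
    [AddCommGroup E] [Module K E] [AddCommGroup E'] [Module K E'] :
    TensorAlgebra K (E ⊗[K] E') →ₐ[K] TensorAlgebra K E ⊗[K] TensorAlgebra K E' :=
  TensorAlgebra.lift K
    (TensorProduct.map (TensorAlgebra.ι K) (TensorAlgebra.ι K))


section ShuffleLemmas
variable (K : Type*) [CommSemiring K] {ι : Type*}
variable (M N : ι → Type*) [∀ i, AddCommMonoid (M i)] [∀ i, Module K (M i)]
  [∀ i, AddCommMonoid (N i)] [∀ i, Module K (N i)]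

lemma shuffle_tprod_tmul (m : ∀ i, M i) (y : ⨂[K] i, N i) :
    shuffle K M N (PiTensorProduct.tprod K m ⊗ₜ[K] y) = shuffleAux K M N m y := by
  simp [shuffle]

lemma shuffle_tprod (m : ∀ i, M i) (n : ∀ i, N i) :
    shuffle K M N (PiTensorProduct.tprod K m ⊗ₜ[K] PiTensorProduct.tprod K n)
      = PiTensorProduct.tprod K (fun i => m i ⊗ₜ[K] n i) := by
  rw [shuffle_tprod_tmul, shuffleAux_tprod]

end ShuffleLemmas

section Gm
variable {K : Type*} [CommSemiring K] {V : Type*} [AddCommMonoid V] [Module K V]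

/-- Abbreviation for the graded multiplication on tensor powers. -/
noncomputable def gm {i j : ℕ} (x : ⨂[K]^i V) (y : ⨂[K]^j V) : ⨂[K]^(i + j) V :=
  TensorPower.mulEquiv (x ⊗ₜ[K] y)

lemma gm_eq_gMul {i j : ℕ} (x : ⨂[K]^i V) (y : ⨂[K]^j V) :
    gm x y = @GradedMonoid.GMul.mul ℕ (fun n => ⨂[K]^n V) _ _ i j x y := by
  rw [TensorPower.gMul_def]; rfl

lemma gm_smul_left {i j : ℕ} (c : K) (x : ⨂[K]^i V) (y : ⨂[K]^j V) :
    gm (c • x) y = c • gm x y := by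
  rw [gm, gm, ← TensorProduct.smul_tmul', map_smul]

lemma gm_smul_right {i j : ℕ} (c : K) (x : ⨂[K]^i V) (y : ⨂[K]^j V) :
    gm x (c • y) = c • gm x y := by
  rw [gm, gm, TensorProduct.tmul_smul, map_smul]

lemma gm_add_left {i j : ℕ} (x x' : ⨂[K]^i V) (y : ⨂[K]^j V) :
    gm (x + x') y = gm x y + gm x' y := by
  rw [gm, gm, gm, TensorProduct.add_tmul, map_add]

lemma gm_add_right {i j : ℕ} (x : ⨂[K]^i V) (y y' : ⨂[K]^j V) :
    gm x (y + y') = gm x y + gm x y' := by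
  rw [gm, gm, gm, TensorProduct.tmul_add, map_add]

lemma gm_tprod {i j : ℕ} (a : Fin i → V) (b : Fin j → V) :
    gm (PiTensorProduct.tprod K a) (PiTensorProduct.tprod K b)
      = PiTensorProduct.tprod K (Fin.append a b) := by
  rw [gm_eq_gMul]; exact TensorPower.tprod_mul_tprod K a b

lemma mu_gm {i j : ℕ} (x : ⨂[K]^i V) (y : ⨂[K]^j V) :
    TensorPower.toTensorAlgebra (gm x y)
      = TensorPower.toTensorAlgebra x * TensorPower.toTensorAlgebra y := by
  rw [gm_eq_gMul]; exact TensorPower.toTensorAlgebra_gMul x y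

lemma tprod_split (a b : ℕ) (w : Fin (a + b) → V) :
    PiTensorProduct.tprod K w
      = gm (PiTensorProduct.tprod K (fun i => w (Fin.castAdd b i)))
          (PiTensorProduct.tprod K (fun i => w (Fin.natAdd a i))) := by
  rw [gm_tprod]
  congr 1
  funext i
  induction i using Fin.addCases with
  | left j => simp [Fin.append_left]
  | right j => simp [Fin.append_right]

end Gm

section ShuffleMul
variable {K : Type*} [CommSemiring K] {E E' : Type*} [AddCommMonoid E] [Module K E]
  [AddCommMonoid E'] [Module K E']

lemma shuffle_gm {a b : ℕ} (x₁ : ⨂[K]^a E) (x₂ : ⨂[K]^b E) (y₁ : ⨂[K]^a E') (y₂ : ⨂[K]^b E') :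
    shuffle K (fun _ : Fin (a + b) => E) (fun _ : Fin (a + b) => E') (gm x₁ x₂ ⊗ₜ[K] gm y₁ y₂)
      = gm (shuffle K (fun _ : Fin a => E) (fun _ : Fin a => E') (x₁ ⊗ₜ[K] y₁))
          (shuffle K (fun _ : Fin b => E) (fun _ : Fin b => E') (x₂ ⊗ₜ[K] y₂)) := by
  induction x₁ using PiTensorProduct.induction_on with
  | add z w ihz ihw =>
    simp only [gm_add_left, add_tmul, map_add, ihz, ihw]
  | smul_tprod c₁ e₁ =>
    induction y₁ using PiTensorProduct.induction_on with
    | add z w ihz ihw =>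
      simp only [gm_add_left, add_tmul, tmul_add, map_add, ihz, ihw]
    | smul_tprod c₂ f₁ =>
      induction x₂ using PiTensorProduct.induction_on with
      | add z w ihz ihw =>
        simp only [gm_add_right, add_tmul, tmul_add, map_add, ihz, ihw]
      | smul_tprod c₃ e₂ =>
        induction y₂ using PiTensorProduct.induction_on with
        | add z w ihz ihw =>
          simp only [gm_add_right, add_tmul, tmul_add, map_add, ihz, ihw]
        | smul_tprod c₄ f₂ =>
          have core :
              shuffle K (fun _ : Fin (a + b) => E) (fun _ : Fin (a + b) => E')
                  (gm (PiTensorProduct.tprod K e₁) (PiTensorProduct.tprod K e₂) ⊗ₜ[K]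
                    gm (PiTensorProduct.tprod K f₁) (PiTensorProduct.tprod K f₂))
                = gm (shuffle K (fun _ : Fin a => E) (fun _ : Fin a => E')
                      (PiTensorProduct.tprod K e₁ ⊗ₜ[K] PiTensorProduct.tprod K f₁))
                    (shuffle K (fun _ : Fin b => E) (fun _ : Fin b => E')
                      (PiTensorProduct.tprod K e₂ ⊗ₜ[K] PiTensorProduct.tprod K f₂)) := by
            rw [gm_tprod, gm_tprod, shuffle_tprod, shuffle_tprod, shuffle_tprod, gm_tprod]
            congr 1
            funext i
            induction i using Fin.addCases with
            | left j => simp [Fin.append_left]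
            | right j => simp [Fin.append_right]
          simp only [gm_smul_left, gm_smul_right, ← TensorProduct.smul_tmul',
            TensorProduct.tmul_smul, map_smul, smul_smul, core]
          first
          | rfl
          | (congr 1; ring)

end ShuffleMul

section ListProd
variable {K : Type*} [CommSemiring K] {B C : Type*} [Semiring B] [Algebra K B]
  [Semiring C] [Algebra K C]

lemma list_prod_tmul : ∀ (n : ℕ) (x : Fin n → B) (y : Fin n → C),
    (List.ofFn (fun i => x i ⊗ₜ[K] y i)).prod
      = (List.ofFn x).prod ⊗ₜ[K] (List.ofFn y).prod := by
  intro n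
  induction n with
  | zero => intro x y; simp [Algebra.TensorProduct.one_def]
  | succ n ih =>
    intro x y
    simp only [List.ofFn_succ, List.prod_cons, ih, Algebra.TensorProduct.tmul_mul_tmul]

end ListProd

section TildeIMu
variable {K : Type*} [CommRing K] {E E' : Type*}
  [AddCommGroup E] [Module K E] [AddCommGroup E'] [Module K E']

lemma tildeI_mu_shuffle (n : ℕ) (y : (⨂[K]^n E) ⊗[K] (⨂[K]^n E')) :
    tildeI K E E' (TensorPower.toTensorAlgebra
        (shuffle K (fun _ : Fin n => E) (fun _ : Fin n => E') y))
      = TensorProduct.map (TensorPower.toTensorAlgebra) (TensorPower.toTensorAlgebra) y := by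
  induction y using TensorProduct.induction_on with
  | zero => simp
  | add z w ihz ihw => simp only [map_add, ihz, ihw]
  | tmul u v =>
    induction u using PiTensorProduct.induction_on with
    | add z w ihz ihw => simp only [add_tmul, map_add, ihz, ihw]
    | smul_tprod c e =>
      induction v using PiTensorProduct.induction_on with
      | add z w ihz ihw => simp only [tmul_add, map_add, ihz, ihw]
      | smul_tprod c' e' =>
        simp only [← TensorProduct.smul_tmul', TensorProduct.tmul_smul, map_smul]
        have key : ∀ i : Fin n,
            (tildeI K E E') (TensorAlgebra.ι K (e i ⊗ₜ[K] e' i))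
              = TensorAlgebra.ι K (e i) ⊗ₜ[K] TensorAlgebra.ι K (e' i) := by
          intro i
          rw [tildeI, TensorAlgebra.lift_ι_apply, TensorProduct.map_tmul]
        rw [shuffle_tprod, TensorProduct.map_tmul]
        simp only [TensorPower.toTensorAlgebra_tprod, TensorAlgebra.tprod_apply,
          map_list_prod, List.map_ofFn, Function.comp_def, key]
        rw [list_prod_tmul]

end TildeIMu

section DS
variable {K : Type*} [CommSemiring K] {V : Type*} [AddCommMonoid V] [Module K V]

lemma toDirectSum_toTensorAlgebra {n : ℕ} (u : ⨂[K]^n V) :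
    TensorAlgebra.toDirectSum (TensorPower.toTensorAlgebra u)
      = DirectSum.of (fun i => ⨂[K]^i V) n u := by
  induction u using PiTensorProduct.induction_on with
  | smul_tprod c f =>
    rw [← DirectSum.lof_eq_of K]
    simp only [map_smul]
    rw [DirectSum.lof_eq_of K]
    rw [TensorPower.toTensorAlgebra_tprod, TensorAlgebra.toDirectSum_tensorPower_tprod]
  | add x y ihx ihy =>
    rw [← DirectSum.lof_eq_of K] at *
    simp only [map_add, ihx, ihy]

lemma ofDirectSum_of {n : ℕ} (u : ⨂[K]^n V) :
    TensorAlgebra.ofDirectSum (DirectSum.of (fun i => ⨂[K]^i V) n u)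
      = TensorPower.toTensorAlgebra u := by
  have := TensorAlgebra.toDirectSum_ofDirectSum (R := K) (M := V)
    (DirectSum.of (fun i => ⨂[K]^i V) n u)
  have h2 := congrArg TensorAlgebra.ofDirectSum (toDirectSum_toTensorAlgebra (K := K) u)
  rw [TensorAlgebra.ofDirectSum_toDirectSum] at h2
  exact h2.symm

lemma span_mu_top (x : TensorAlgebra K V) :
    x ∈ Submodule.span K
      {y : TensorAlgebra K V | ∃ (n : ℕ) (u : ⨂[K]^n V), y = TensorPower.toTensorAlgebra u} := by
  have hx : x = TensorAlgebra.ofDirectSum (TensorAlgebra.toDirectSum x) :=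
    (TensorAlgebra.ofDirectSum_toDirectSum x).symm
  rw [hx]
  generalize TensorAlgebra.toDirectSum x = d
  induction d using DirectSum.induction_on with
  | zero => simp only [map_zero]; exact Submodule.zero_mem _
  | of n u =>
    rw [ofDirectSum_of]
    exact Submodule.subset_span ⟨n, u, rfl⟩
  | add y z ihy ihz => rw [map_add]; exact Submodule.add_mem _ ihy ihz

end DS

section BSpan
variable {K : Type*} [CommSemiring K] {E E' : Type*} [AddCommMonoid E] [Module K E]
  [AddCommMonoid E'] [Module K E']

lemma span_mu_tmul_top (x : TensorAlgebra K E ⊗[K] TensorAlgebra K E') :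
    x ∈ Submodule.span K
      {y : TensorAlgebra K E ⊗[K] TensorAlgebra K E' |
        ∃ (m n : ℕ) (u : ⨂[K]^m E) (v : ⨂[K]^n E'),
          y = TensorPower.toTensorAlgebra u ⊗ₜ[K] TensorPower.toTensorAlgebra v} := by
  have H : ∀ (m : ℕ) (u : ⨂[K]^m E) (b : TensorAlgebra K E'),
      TensorPower.toTensorAlgebra u ⊗ₜ[K] b ∈ Submodule.span K
        {y : TensorAlgebra K E ⊗[K] TensorAlgebra K E' |
          ∃ (m n : ℕ) (u : ⨂[K]^m E) (v : ⨂[K]^n E'),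
            y = TensorPower.toTensorAlgebra u ⊗ₜ[K] TensorPower.toTensorAlgebra v} := by
    intro m u b
    have hb := span_mu_top (K := K) (V := E') b
    induction hb using Submodule.span_induction with
    | mem y hy => obtain ⟨n, v, rfl⟩ := hy; exact Submodule.subset_span ⟨m, n, u, v, rfl⟩
    | zero => rw [TensorProduct.tmul_zero]; exact Submodule.zero_mem _
    | add y z _ _ ihy ihz => rw [TensorProduct.tmul_add]; exact Submodule.add_mem _ ihy ihz
    | smul c y _ ihy => rw [TensorProduct.tmul_smul]; exact Submodule.smul_mem _ _ ihy
  induction x using TensorProduct.induction_on with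
  | zero => exact Submodule.zero_mem _
  | add y z ihy ihz => exact Submodule.add_mem _ ihy ihz
  | tmul a b =>
    have ha := span_mu_top (K := K) (V := E) a
    induction ha using Submodule.span_induction with
    | mem y hy => obtain ⟨m, u, rfl⟩ := hy; exact H m u b
    | zero => rw [TensorProduct.zero_tmul]; exact Submodule.zero_mem _
    | add y z _ _ ihy ihz => rw [TensorProduct.add_tmul]; exact Submodule.add_mem _ ihy ihz
    | smul c y _ ihy => rw [← TensorProduct.smul_tmul']; exact Submodule.smul_mem _ _ ihy
end BSpan

section Surj
variable {K : Type*} [CommSemiring K] {E E' : Type*} [AddCommMonoid E] [Module K E]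
  [AddCommMonoid E'] [Module K E']

lemma shuffle_surjective (n : ℕ) :
    Function.Surjective (shuffle K (fun _ : Fin n => E) (fun _ : Fin n => E')) := by
  intro w
  suffices h : w ∈ LinearMap.range (shuffle K (fun _ : Fin n => E) (fun _ : Fin n => E')) by
    exact h
  have : w ∈ (⊤ : Submodule K (⨂[K] _ : Fin n, (E ⊗[K] E'))) := trivial
  rw [← PiTensorProduct.span_tprod_eq_top] at this
  induction this using Submodule.span_induction with
  | zero => exact Submodule.zero_mem _
  | add x y _ _ ihx ihy => exact Submodule.add_mem _ ihx ihy
  | smul c x _ ihx => exact Submodule.smul_mem _ _ ihx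
  | mem x hx =>
    classical
    obtain ⟨z, rfl⟩ := hx
    have hz : ∀ i, ∃ Sf : Finset (E × E'), z i = Sf.sum fun p => p.1 ⊗ₜ[K] p.2 := fun i =>
      TensorProduct.exists_finset (z i)
    choose A hA using hz
    have hzz : z = fun i => ∑ p ∈ A i, ((fun _ p => p.1 ⊗ₜ[K] p.2 :
        ∀ _ : Fin n, E × E' → E ⊗[K] E') i p) := funext hA
    rw [hzz, MultilinearMap.map_sum_finset (PiTensorProduct.tprod K)]
    apply Submodule.sum_mem
    intro r _
    refine ⟨PiTensorProduct.tprod K (fun i => (r i).1) ⊗ₜ[K]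
      PiTensorProduct.tprod K (fun i => (r i).2), ?_⟩
    rw [shuffle_tprod]

end Surj

section Pdef
variable (K : Type*) [Field K] (E E' : Type*) [AddCommGroup E] [Module K E]
  [AddCommGroup E'] [Module K E']

/-- Degree-`(m, n)` block of the retraction. -/
noncomputable def gcomp (m n : ℕ) :
    ((⨂[K]^m E) ⊗[K] (⨂[K]^n E')) →ₗ[K] TensorAlgebra K (E ⊗[K] E') :=
  if h : m = n then
    (TensorPower.toTensorAlgebra ∘ₗ shuffle K (fun _ : Fin n => E) (fun _ : Fin n => E')) ∘ₗ
      LinearMap.rTensor (⨂[K]^n E') (TensorPower.cast K E h).toLinearMap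
  else 0

/-- The linear retraction `T(E) ⊗ T(E') → T(E ⊗ E')` of `ĩ`. -/
noncomputable def Pretr :
    (TensorAlgebra K E ⊗[K] TensorAlgebra K E') →ₗ[K] TensorAlgebra K (E ⊗[K] E') :=
  (DirectSum.toModule K (ℕ × ℕ) _ fun p => gcomp K E E' p.1 p.2) ∘ₗ
    (TensorProduct.directSum K K (fun m => ⨂[K]^m E) (fun n => ⨂[K]^n E')).toLinearMap ∘ₗ
    TensorProduct.map (TensorAlgebra.toDirectSum).toLinearMap
      (TensorAlgebra.toDirectSum).toLinearMap

variable {K E E'}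

lemma Pretr_mu_tmul_mu {m n : ℕ} (u : ⨂[K]^m E) (v : ⨂[K]^n E') :
    Pretr K E E' (TensorPower.toTensorAlgebra u ⊗ₜ[K] TensorPower.toTensorAlgebra v)
      = gcomp K E E' m n (u ⊗ₜ[K] v) := by
  rw [Pretr]
  simp only [LinearMap.comp_apply, LinearEquiv.coe_coe, TensorProduct.map_tmul,
    AlgHom.toLinearMap_apply]
  rw [toDirectSum_toTensorAlgebra, toDirectSum_toTensorAlgebra,
    ← DirectSum.lof_eq_of K, ← DirectSum.lof_eq_of K,
    TensorProduct.directSum_lof_tmul_lof, DirectSum.toModule_lof]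

lemma gcomp_same (n : ℕ) (y : (⨂[K]^n E) ⊗[K] (⨂[K]^n E')) :
    gcomp K E E' n n y = TensorPower.toTensorAlgebra
      (shuffle K (fun _ : Fin n => E) (fun _ : Fin n => E') y) := by
  rw [gcomp, dif_pos rfl, TensorPower.cast_refl]
  simp

lemma gcomp_ne {m n : ℕ} (h : m ≠ n) : gcomp K E E' m n = 0 := by
  rw [gcomp, dif_neg h]

lemma gcomp_cast {m n : ℕ} (h : m = n) (u : ⨂[K]^m E) (v : ⨂[K]^n E') :
    gcomp K E E' m n (u ⊗ₜ[K] v) = TensorPower.toTensorAlgebra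
      (shuffle K (fun _ : Fin n => E) (fun _ : Fin n => E')
        ((TensorPower.cast K E h u) ⊗ₜ[K] v)) := by
  rw [gcomp, dif_pos h]
  simp

lemma mu_shuffle_cast {m n : ℕ} (h : m = n) (u : ⨂[K]^m E) (v : ⨂[K]^n E') :
    TensorPower.toTensorAlgebra (shuffle K (fun _ : Fin n => E) (fun _ : Fin n => E')
        ((TensorPower.cast K E h u) ⊗ₜ[K] v))
      = TensorPower.toTensorAlgebra (shuffle K (fun _ : Fin m => E) (fun _ : Fin m => E')
        (u ⊗ₜ[K] (TensorPower.cast K E' h.symm v))) := by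
  subst h
  rw [TensorPower.cast_refl, TensorPower.cast_refl]
  simp

lemma Pretr_map_mu (n : ℕ) (y : (⨂[K]^n E) ⊗[K] (⨂[K]^n E')) :
    Pretr K E E' (TensorProduct.map TensorPower.toTensorAlgebra TensorPower.toTensorAlgebra y)
      = TensorPower.toTensorAlgebra
          (shuffle K (fun _ : Fin n => E) (fun _ : Fin n => E') y) := by
  induction y using TensorProduct.induction_on with
  | zero => simp
  | add z w ihz ihw => simp only [map_add, ihz, ihw]
  | tmul u v => rw [TensorProduct.map_tmul, Pretr_mu_tmul_mu, gcomp_same]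

lemma Pretr_tildeI (x : TensorAlgebra K (E ⊗[K] E')) :
    Pretr K E E' (tildeI K E E' x) = x := by
  have hx := span_mu_top (K := K) (V := E ⊗[K] E') x
  induction hx using Submodule.span_induction with
  | mem y hy =>
    obtain ⟨n, u, rfl⟩ := hy
    obtain ⟨y, rfl⟩ := shuffle_surjective (K := K) (E := E) (E' := E') n u
    rw [tildeI_mu_shuffle, Pretr_map_mu]
  | zero => simp
  | add y z _ _ ihy ihz => simp only [map_add, ihy, ihz]
  | smul c y _ ihy => simp only [map_smul, ihy]

end Pdef

section TsSpan
variable {K : Type*} [Field K] {A : Type*} [Ring A] [Algebra K A]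

/-- The two-sided ideal generated by `X`, as a `K`-submodule. -/
def tsSpan (K : Type*) [Field K] {A : Type*} [Ring A] [Algebra K A] (X : Set A) : Submodule K A :=
  Submodule.span K {x | ∃ a b, ∃ m ∈ X, x = a * m * b}

lemma mem_tsSpan_of_mem {X : Set A} {m : A} (hm : m ∈ X) : m ∈ tsSpan K X :=
  Submodule.subset_span ⟨1, 1, m, hm, by simp⟩

lemma tsSpan_mul_left {X : Set A} (c : A) {x : A} (hx : x ∈ tsSpan K X) :
    c * x ∈ tsSpan K X := by
  induction hx using Submodule.span_induction with
  | mem y hy =>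
    obtain ⟨a, b, m, hm, rfl⟩ := hy
    exact Submodule.subset_span ⟨c * a, b, m, hm, by rw [← mul_assoc, ← mul_assoc]⟩
  | zero => simp
  | add y z _ _ hy hz => rw [mul_add]; exact add_mem hy hz
  | smul r y _ hy => rw [mul_smul_comm]; exact Submodule.smul_mem _ _ hy

lemma tsSpan_mul_right {X : Set A} (c : A) {x : A} (hx : x ∈ tsSpan K X) :
    x * c ∈ tsSpan K X := by
  induction hx using Submodule.span_induction with
  | mem y hy =>
    obtain ⟨a, b, m, hm, rfl⟩ := hy
    exact Submodule.subset_span ⟨a, b * c, m, hm, by rw [← mul_assoc]⟩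
  | zero => simp
  | add y z _ _ hy hz => rw [add_mul]; exact add_mem hy hz
  | smul r y _ hy => rw [smul_mul_assoc]; exact Submodule.smul_mem _ _ hy

/-- `tsSpan` as a left ideal. -/
def tsIdeal (K : Type*) [Field K] {A : Type*} [Ring A] [Algebra K A] (X : Set A) : Ideal A where
  carrier := tsSpan K X
  add_mem' := fun h1 h2 => add_mem h1 h2
  zero_mem' := zero_mem _
  smul_mem' := fun c x hx => by simpa [smul_eq_mul] using tsSpan_mul_left c hx

lemma mem_tsIdeal {X : Set A} {x : A} : x ∈ tsIdeal K X ↔ x ∈ tsSpan K X := Iff.rfl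

lemma ringQuotRel_sub_mem {r : A → A → Prop} {X : Set A}
    (h : ∀ x y, r x y → x - y ∈ tsSpan K X) :
    ∀ {x y : A}, RingQuot.Rel r x y → x - y ∈ tsSpan K X := by
  intro x y hxy
  induction hxy with
  | of h' => exact h _ _ h'
  | add_left _ ih => simpa using ih
  | mul_left _ ih => rw [← sub_mul]; exact tsSpan_mul_right _ ih
  | mul_right _ ih => rw [← mul_sub]; exact tsSpan_mul_left _ ih

lemma eqvGen_sub_mem {r : A → A → Prop} {X : Set A}
    (h : ∀ x y, r x y → x - y ∈ tsSpan K X) :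
    ∀ {x y : A}, Relation.EqvGen (RingQuot.Rel r) x y → x - y ∈ tsSpan K X := by
  intro x y hxy
  induction hxy with
  | rel a b hab => exact ringQuotRel_sub_mem h hab
  | refl a => simp
  | symm a b _ ih => rw [← neg_sub]; exact neg_mem ih
  | trans a b c _ _ ih1 ih2 => have := add_mem ih1 ih2; rwa [sub_add_sub_cancel] at this

lemma mkAlgHom_ker_le_tsSpan {r : A → A → Prop} {X : Set A}
    (h : ∀ x y, r x y → x - y ∈ tsSpan K X) {z : A}
    (hz : RingQuot.mkAlgHom K r z = 0) : z ∈ tsSpan K X := by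
  have h1 : RingQuot.mkRingHom r z = RingQuot.mkRingHom r 0 := by
    have e : ∀ w, RingQuot.mkRingHom r w = RingQuot.mkAlgHom K r w := by
      intro w
      rw [← RingQuot.mkAlgHom_coe K r]
      rfl
    rw [e, e, hz, map_zero]
  rw [RingQuot.mkRingHom_def] at h1
  simp only [RingHom.coe_mk, MonoidHom.coe_mk, OneHom.coe_mk, RingQuot.mk.injEq] at h1
  have h2 := Quot.eq.mp h1
  simpa using eqvGen_sub_mem h h2

end TsSpan

section Core
variable {K : Type*} [Field K] {E E' : Type*} [AddCommGroup E] [Module K E]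
  [AddCommGroup E'] [Module K E'] {N : ℕ}

lemma core_left (R : Submodule K (⨂[K]^N E)) (X : Set (TensorAlgebra K (E ⊗[K] E')))
    (hX : ∀ r ∈ R, ∀ w : ⨂[K]^N E', TensorPower.toTensorAlgebra
      (shuffle K (fun _ : Fin N => E) (fun _ : Fin N => E') (r ⊗ₜ[K] w)) ∈ X)
    (p p' : ℕ) (u : ⨂[K]^p E) (u' : ⨂[K]^p' E) {r : ⨂[K]^N E} (hr : r ∈ R)
    (W : ⨂[K]^(p + (N + p')) E') :
    TensorPower.toTensorAlgebra (shuffle K (fun _ : Fin (p + (N + p')) => E)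
      (fun _ : Fin (p + (N + p')) => E') (gm u (gm r u') ⊗ₜ[K] W)) ∈ tsSpan K X := by
  induction W using PiTensorProduct.induction_on with
  | add z w ihz ihw => rw [TensorProduct.tmul_add, map_add, map_add]; exact add_mem ihz ihw
  | smul_tprod c w =>
    rw [TensorProduct.tmul_smul, map_smul, map_smul]
    apply Submodule.smul_mem
    rw [tprod_split p (N + p') w, tprod_split N p' (fun i => w (Fin.natAdd p i)),
      shuffle_gm, shuffle_gm, mu_gm, mu_gm]
    exact Submodule.subset_span
      ⟨_, _, _, hX r hr (PiTensorProduct.tprod K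
        (fun i => w (Fin.natAdd p (Fin.castAdd p' i)))), (mul_assoc _ _ _).symm⟩

lemma core_right (R' : Submodule K (⨂[K]^N E')) (X : Set (TensorAlgebra K (E ⊗[K] E')))
    (hX : ∀ r' ∈ R', ∀ w : ⨂[K]^N E, TensorPower.toTensorAlgebra
      (shuffle K (fun _ : Fin N => E) (fun _ : Fin N => E') (w ⊗ₜ[K] r')) ∈ X)
    (q q' : ℕ) (v : ⨂[K]^q E') (v' : ⨂[K]^q' E') {r' : ⨂[K]^N E'} (hr' : r' ∈ R')
    (W : ⨂[K]^(q + (N + q')) E) :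
    TensorPower.toTensorAlgebra (shuffle K (fun _ : Fin (q + (N + q')) => E)
      (fun _ : Fin (q + (N + q')) => E') (W ⊗ₜ[K] gm v (gm r' v'))) ∈ tsSpan K X := by
  induction W using PiTensorProduct.induction_on with
  | add z w ihz ihw => rw [TensorProduct.add_tmul, map_add, map_add]; exact add_mem ihz ihw
  | smul_tprod c w =>
    rw [← TensorProduct.smul_tmul', map_smul, map_smul]
    apply Submodule.smul_mem
    rw [tprod_split q (N + q') w, tprod_split N q' (fun i => w (Fin.natAdd q i)),
      shuffle_gm, shuffle_gm, mu_gm, mu_gm]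
    exact Submodule.subset_span
      ⟨_, _, _, hX r' hr' (PiTensorProduct.tprod K
        (fun i => w (Fin.natAdd q (Fin.castAdd q' i)))), (mul_assoc _ _ _).symm⟩

lemma P_genL (R : Submodule K (⨂[K]^N E)) (X : Set (TensorAlgebra K (E ⊗[K] E')))
    (hX : ∀ r ∈ R, ∀ w : ⨂[K]^N E', TensorPower.toTensorAlgebra
      (shuffle K (fun _ : Fin N => E) (fun _ : Fin N => E') (r ⊗ₜ[K] w)) ∈ X)
    (a b : TensorAlgebra K E ⊗[K] TensorAlgebra K E') {r : ⨂[K]^N E} (hr : r ∈ R) :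
    Pretr K E E' (a * (TensorPower.toTensorAlgebra r ⊗ₜ[K] 1) * b) ∈ tsSpan K X := by
  have pure : ∀ (p q p' q' : ℕ) (u : ⨂[K]^p E) (v : ⨂[K]^q E')
      (u' : ⨂[K]^p' E) (v' : ⨂[K]^q' E'),
      Pretr K E E' ((TensorPower.toTensorAlgebra u ⊗ₜ[K] TensorPower.toTensorAlgebra v)
          * (TensorPower.toTensorAlgebra r ⊗ₜ[K] 1)
          * (TensorPower.toTensorAlgebra u' ⊗ₜ[K] TensorPower.toTensorAlgebra v'))
        ∈ tsSpan K X := by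
    intro p q p' q' u v u' v'
    rw [Algebra.TensorProduct.tmul_mul_tmul, Algebra.TensorProduct.tmul_mul_tmul, mul_one,
      mul_assoc (TensorPower.toTensorAlgebra u), ← mu_gm r u', ← mu_gm u (gm r u'),
      ← mu_gm v v', Pretr_mu_tmul_mu]
    by_cases h : p + (N + p') = q + q'
    · rw [gcomp_cast h, mu_shuffle_cast h]
      exact core_left R X hX p p' u u' hr _
    · rw [gcomp_ne h, LinearMap.zero_apply]
      exact zero_mem _
  have Hb : ∀ (p q : ℕ) (u : ⨂[K]^p E) (v : ⨂[K]^q E')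
      (b : TensorAlgebra K E ⊗[K] TensorAlgebra K E'),
      Pretr K E E' ((TensorPower.toTensorAlgebra u ⊗ₜ[K] TensorPower.toTensorAlgebra v)
          * (TensorPower.toTensorAlgebra r ⊗ₜ[K] 1) * b) ∈ tsSpan K X := by
    intro p q u v b
    have hb := span_mu_tmul_top b
    induction hb using Submodule.span_induction with
    | mem y hy => obtain ⟨p', q', u', v', rfl⟩ := hy; exact pure p q p' q' u v u' v'
    | zero => rw [mul_zero, map_zero]; exact zero_mem _
    | add y z _ _ ihy ihz => rw [mul_add, map_add]; exact add_mem ihy ihz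
    | smul c y _ ihy => rw [mul_smul_comm, map_smul]; exact Submodule.smul_mem _ _ ihy
  have ha := span_mu_tmul_top a
  induction ha using Submodule.span_induction with
  | mem y hy => obtain ⟨p, q, u, v, rfl⟩ := hy; exact Hb p q u v b
  | zero => rw [zero_mul, zero_mul, map_zero]; exact zero_mem _
  | add y z _ _ ihy ihz => rw [add_mul, add_mul, map_add]; exact add_mem ihy ihz
  | smul c y _ ihy => rw [smul_mul_assoc, smul_mul_assoc, map_smul]
                      exact Submodule.smul_mem _ _ ihy

lemma P_genR (R' : Submodule K (⨂[K]^N E')) (X : Set (TensorAlgebra K (E ⊗[K] E')))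
    (hX : ∀ r' ∈ R', ∀ w : ⨂[K]^N E, TensorPower.toTensorAlgebra
      (shuffle K (fun _ : Fin N => E) (fun _ : Fin N => E') (w ⊗ₜ[K] r')) ∈ X)
    (a b : TensorAlgebra K E ⊗[K] TensorAlgebra K E') {r' : ⨂[K]^N E'} (hr' : r' ∈ R') :
    Pretr K E E' (a * ((1 : TensorAlgebra K E) ⊗ₜ[K] TensorPower.toTensorAlgebra r') * b)
      ∈ tsSpan K X := by
  have pure : ∀ (p q p' q' : ℕ) (u : ⨂[K]^p E) (v : ⨂[K]^q E')
      (u' : ⨂[K]^p' E) (v' : ⨂[K]^q' E'),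
      Pretr K E E' ((TensorPower.toTensorAlgebra u ⊗ₜ[K] TensorPower.toTensorAlgebra v)
          * ((1 : TensorAlgebra K E) ⊗ₜ[K] TensorPower.toTensorAlgebra r')
          * (TensorPower.toTensorAlgebra u' ⊗ₜ[K] TensorPower.toTensorAlgebra v'))
        ∈ tsSpan K X := by
    intro p q p' q' u v u' v'
    rw [Algebra.TensorProduct.tmul_mul_tmul, Algebra.TensorProduct.tmul_mul_tmul, mul_one,
      mul_assoc (TensorPower.toTensorAlgebra v), ← mu_gm r' v', ← mu_gm v (gm r' v'),
      ← mu_gm u u', Pretr_mu_tmul_mu]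
    by_cases h : p + p' = q + (N + q')
    · rw [gcomp_cast h]
      exact core_right R' X hX q q' v v' hr' _
    · rw [gcomp_ne h, LinearMap.zero_apply]
      exact zero_mem _
  have Hb : ∀ (p q : ℕ) (u : ⨂[K]^p E) (v : ⨂[K]^q E')
      (b : TensorAlgebra K E ⊗[K] TensorAlgebra K E'),
      Pretr K E E' ((TensorPower.toTensorAlgebra u ⊗ₜ[K] TensorPower.toTensorAlgebra v)
          * ((1 : TensorAlgebra K E) ⊗ₜ[K] TensorPower.toTensorAlgebra r') * b)
        ∈ tsSpan K X := by
    intro p q u v b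
    have hb := span_mu_tmul_top b
    induction hb using Submodule.span_induction with
    | mem y hy => obtain ⟨p', q', u', v', rfl⟩ := hy; exact pure p q p' q' u v u' v'
    | zero => rw [mul_zero, map_zero]; exact zero_mem _
    | add y z _ _ ihy ihz => rw [mul_add, map_add]; exact add_mem ihy ihz
    | smul c y _ ihy => rw [mul_smul_comm, map_smul]; exact Submodule.smul_mem _ _ ihy
  have ha := span_mu_tmul_top a
  induction ha using Submodule.span_induction with
  | mem y hy => obtain ⟨p, q, u, v, rfl⟩ := hy; exact Hb p q u v b
  | zero => rw [zero_mul, zero_mul, map_zero]; exact zero_mem _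
  | add y z _ _ ihy ihz => rw [add_mul, add_mul, map_add]; exact add_mem ihy ihz
  | smul c y _ ihy => rw [smul_mul_assoc, smul_mul_assoc, map_smul]
                      exact Submodule.smul_mem _ _ ihy

end Core

section Main
variable {K : Type*} [Field K] {E E' : Type*} [AddCommGroup E] [Module K E]
  [AddCommGroup E'] [Module K E'] {N : ℕ}

lemma homQuot_mu_zero {V : Type*} [AddCommGroup V] [Module K V] {N : ℕ}
    {R : Submodule K (⨂[K]^N V)} {r : ⨂[K]^N V} (hr : r ∈ R) :
    homQuot K V R (TensorPower.toTensorAlgebra r) = 0 := by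
  have hrel : homRel K V R (TensorPower.toTensorAlgebra r) 0 :=
    ⟨⟨r, hr, rfl⟩, rfl⟩
  have := RingQuot.mkAlgHom_rel K hrel
  rw [map_zero] at this
  exact this

lemma homQuot_ker_le {V : Type*} [AddCommGroup V] [Module K V] {N : ℕ}
    {R : Submodule K (⨂[K]^N V)} {z : TensorAlgebra K V} (hz : homQuot K V R z = 0) :
    z ∈ tsSpan K (↑(Submodule.map
      (TensorPower.toTensorAlgebra (R := K) (M := V) (n := N)) R) : Set (TensorAlgebra K V)) := by
  refine mkAlgHom_ker_le_tsSpan ?_ hz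
  rintro x y ⟨hx, rfl⟩
  simpa using mem_tsSpan_of_mem hx

set_option maxHeartbeats 2000000 in
theorem statement3' (N : ℕ) (hN : 2 ≤ N)
    (R : Submodule K (⨂[K]^N E)) (R' : Submodule K (⨂[K]^N E'))
    (S : Submodule K (⨂[K]^N (E ⊗[K] E')))
    (hS : S = Submodule.map (shuffle K (fun _ : Fin N => E) (fun _ : Fin N => E'))
      (LinearMap.range (LinearMap.rTensor (⨂[K]^N E') R.subtype) ⊔
        LinearMap.range (LinearMap.lTensor (⨂[K]^N E) R'.subtype))) :
    LinearMap.ker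
      (((Algebra.TensorProduct.map (homQuot K E R) (homQuot K E' R')).comp
          (tildeI K E E')).toLinearMap) =
    Submodule.span K
      {x : TensorAlgebra K (E ⊗[K] E') | ∃ a b : TensorAlgebra K (E ⊗[K] E'),
        ∃ s ∈ Submodule.map
          (TensorPower.toTensorAlgebra (R := K) (M := E ⊗[K] E') (n := N)) S,
        x = a * s * b} := by
  classical
  set q := homQuot K E R with hqdef
  set q' := homQuot K E' R' with hq'def
  have hq : Function.Surjective q := RingQuot.mkAlgHom_surjective K (homRel K E R)
  have hq' : Function.Surjective q' := RingQuot.mkAlgHom_surjective K (homRel K E' R')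
  set Xt : Set (TensorAlgebra K (E ⊗[K] E')) :=
    (↑(Submodule.map (TensorPower.toTensorAlgebra (R := K) (M := E ⊗[K] E') (n := N)) S) :
      Set (TensorAlgebra K (E ⊗[K] E'))) with hXt
  have target_eq : Submodule.span K
      {x : TensorAlgebra K (E ⊗[K] E') | ∃ a b : TensorAlgebra K (E ⊗[K] E'),
        ∃ s ∈ Submodule.map
          (TensorPower.toTensorAlgebra (R := K) (M := E ⊗[K] E') (n := N)) S,
        x = a * s * b} = tsSpan K Xt := rfl
  rw [target_eq]
  have hXL : ∀ r ∈ R, ∀ w : ⨂[K]^N E', TensorPower.toTensorAlgebra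
      (shuffle K (fun _ : Fin N => E) (fun _ : Fin N => E') (r ⊗ₜ[K] w)) ∈ Xt := by
    intro r hr w
    refine Submodule.mem_map_of_mem ?_
    rw [hS]
    refine Submodule.mem_map_of_mem (Submodule.mem_sup_left ?_)
    exact ⟨(⟨r, hr⟩ : R) ⊗ₜ[K] w, by simp⟩
  have hXR : ∀ r' ∈ R', ∀ w : ⨂[K]^N E, TensorPower.toTensorAlgebra
      (shuffle K (fun _ : Fin N => E) (fun _ : Fin N => E') (w ⊗ₜ[K] r')) ∈ Xt := by
    intro r' hr' w
    refine Submodule.mem_map_of_mem ?_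
    rw [hS]
    refine Submodule.mem_map_of_mem (Submodule.mem_sup_right ?_)
    exact ⟨w ⊗ₜ[K] (⟨r', hr'⟩ : R'), by simp⟩
  apply le_antisymm
  · -- hard direction
    intro x hx
    simp only [LinearMap.mem_ker, AlgHom.toLinearMap_apply, AlgHom.comp_apply] at hx
    -- f x lies in the kernel ideal
    have h1 : tildeI K E E' x ∈ RingHom.ker (Algebra.TensorProduct.map q q') :=
      RingHom.mem_ker.mpr hx
    rw [Algebra.TensorProduct.map_ker q q' hq hq'] at h1
    set XB : Set (TensorAlgebra K E ⊗[K] TensorAlgebra K E') :=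
      {y | (∃ r ∈ R, y = TensorPower.toTensorAlgebra r ⊗ₜ[K] 1) ∨
        ∃ r' ∈ R', y = (1 : TensorAlgebra K E) ⊗ₜ[K] TensorPower.toTensorAlgebra r'} with hXB
    have inclLmem : ∀ k ∈ RingHom.ker q,
        (Algebra.TensorProduct.includeLeft :
          TensorAlgebra K E →ₐ[K] TensorAlgebra K E ⊗[K] TensorAlgebra K E') k
          ∈ tsSpan K XB := by
      intro k hk
      have hk0 : RingQuot.mkAlgHom K (homRel K E R) k = 0 := RingHom.mem_ker.mp hk
      have hk1 := homQuot_ker_le (R := R) hk0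
      clear hk hk0
      induction hk1 using Submodule.span_induction with
      | mem y hy =>
        obtain ⟨a, b, m, hm, rfl⟩ := hy
        obtain ⟨r0, hr0, rfl⟩ := hm
        rw [map_mul, map_mul]
        refine tsSpan_mul_right _ (tsSpan_mul_left _ ?_)
        exact mem_tsSpan_of_mem (Or.inl ⟨r0, hr0, rfl⟩)
      | zero => rw [map_zero]; exact zero_mem _
      | add y z _ _ ihy ihz => rw [map_add]; exact add_mem ihy ihz
      | smul c y _ ihy => rw [map_smul]; exact Submodule.smul_mem _ _ ihy
    have inclRmem : ∀ k ∈ RingHom.ker q',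
        (Algebra.TensorProduct.includeRight :
          TensorAlgebra K E' →ₐ[K] TensorAlgebra K E ⊗[K] TensorAlgebra K E') k
          ∈ tsSpan K XB := by
      intro k hk
      have hk0 : RingQuot.mkAlgHom K (homRel K E' R') k = 0 := RingHom.mem_ker.mp hk
      have hk1 := homQuot_ker_le (R := R') hk0
      clear hk hk0
      induction hk1 using Submodule.span_induction with
      | mem y hy =>
        obtain ⟨a, b, m, hm, rfl⟩ := hy
        obtain ⟨r0, hr0, rfl⟩ := hm
        rw [map_mul, map_mul]
        refine tsSpan_mul_right _ (tsSpan_mul_left _ ?_)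
        exact mem_tsSpan_of_mem (Or.inr ⟨r0, hr0, rfl⟩)
      | zero => rw [map_zero]; exact zero_mem _
      | add y z _ _ ihy ihz => rw [map_add]; exact add_mem ihy ihz
      | smul c y _ ihy => rw [map_smul]; exact Submodule.smul_mem _ _ ihy
    have hL : Ideal.map (Algebra.TensorProduct.includeLeft :
        TensorAlgebra K E →ₐ[K] TensorAlgebra K E ⊗[K] TensorAlgebra K E')
        (RingHom.ker q) ≤ tsIdeal K XB := by
      rw [Ideal.map_le_iff_le_comap]
      intro k hk
      exact inclLmem k hk
    have hRt : Ideal.map (Algebra.TensorProduct.includeRight :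
        TensorAlgebra K E' →ₐ[K] TensorAlgebra K E ⊗[K] TensorAlgebra K E')
        (RingHom.ker q') ≤ tsIdeal K XB := by
      rw [Ideal.map_le_iff_le_comap]
      intro k hk
      exact inclRmem k hk
    have hfx : tildeI K E E' x ∈ tsSpan K XB := by
      obtain ⟨y₁, h₁, y₂, h₂, hsum⟩ := Submodule.mem_sup.mp h1
      rw [← hsum]
      exact add_mem (mem_tsIdeal.mp (hL h₁)) (mem_tsIdeal.mp (hRt h₂))
    clear h1 hL hRt hx
    have hPx : Pretr K E E' (tildeI K E E' x) ∈ tsSpan K Xt := by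
      generalize tildeI K E E' x = z at hfx ⊢
      induction hfx using Submodule.span_induction with
      | mem y hy =>
        obtain ⟨a, b, m, hm, rfl⟩ := hy
        rcases hm with ⟨r0, hr0, rfl⟩ | ⟨r0', hr0', rfl⟩
        · exact P_genL R Xt hXL a b hr0
        · exact P_genR R' Xt hXR a b hr0'
      | zero => rw [map_zero]; exact zero_mem _
      | add y z _ _ ihy ihz => rw [map_add]; exact add_mem ihy ihz
      | smul c y _ ihy => rw [map_smul]; exact Submodule.smul_mem _ _ ihy
    rwa [Pretr_tildeI] at hPx
  · -- easy direction
    rw [tsSpan, Submodule.span_le]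
    rintro _ ⟨a, b, s, hs, rfl⟩
    rw [SetLike.mem_coe, LinearMap.mem_ker]
    simp only [AlgHom.toLinearMap_apply, AlgHom.comp_apply]
    obtain ⟨σ, hσ, rfl⟩ := hs
    rw [map_mul, map_mul, map_mul, map_mul]
    suffices h0 : (Algebra.TensorProduct.map q q') (tildeI K E E'
        (TensorPower.toTensorAlgebra σ)) = 0 by
      rw [h0, mul_zero, zero_mul]
    rw [hS] at hσ
    obtain ⟨y, hy, rfl⟩ := hσ
    rw [tildeI_mu_shuffle]
    obtain ⟨y₁, h₁, y₂, h₂, rfl⟩ := Submodule.mem_sup.mp hy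
    rw [map_add, map_add]
    obtain ⟨t₁, rfl⟩ := h₁
    obtain ⟨t₂, rfl⟩ := h₂
    clear hy
    have Z1 : (Algebra.TensorProduct.map q q') (TensorProduct.map
        TensorPower.toTensorAlgebra TensorPower.toTensorAlgebra
        (LinearMap.rTensor (⨂[K]^N E') R.subtype t₁)) = 0 := by
      induction t₁ using TensorProduct.induction_on with
      | zero => simp
      | add z w ihz ihw => simp only [map_add, ihz, ihw, add_zero]
      | tmul rr w =>
        rw [LinearMap.rTensor_tmul, TensorProduct.map_tmul, Algebra.TensorProduct.map_tmul]
        rw [show q (TensorPower.toTensorAlgebra (R.subtype rr)) = 0 from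
          homQuot_mu_zero rr.2]
        rw [TensorProduct.zero_tmul]
    have Z2 : (Algebra.TensorProduct.map q q') (TensorProduct.map
        TensorPower.toTensorAlgebra TensorPower.toTensorAlgebra
        (LinearMap.lTensor (⨂[K]^N E) R'.subtype t₂)) = 0 := by
      induction t₂ using TensorProduct.induction_on with
      | zero => simp
      | add z w ihz ihw => simp only [map_add, ihz, ihw, add_zero]
      | tmul w rr =>
        rw [LinearMap.lTensor_tmul, TensorProduct.map_tmul, Algebra.TensorProduct.map_tmul]
        rw [show q' (TensorPower.toTensorAlgebra (R'.subtype rr)) = 0 from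
          homQuot_mu_zero rr.2]
        rw [TensorProduct.tmul_zero]
    rw [Z1, Z2, add_zero]

end Main

/-- Let `𝒜 = T(E)/(R)` and `𝒜' = T(E')/(R')` be `N`-homogeneous algebras,
and let `S ⊆ (E ⊗ E')^⊗N` be the preimage under the degree-`N` component `ĩ_N` of `ĩ`
(equivalently, the image under the shuffle map) of `R ⊗ E'^⊗N + E^⊗N ⊗ R'`.  Then the kernel
of the composite `T(E ⊗ E') → T(E) ⊗ T(E') → 𝒜 ⊗ 𝒜'` is the two-sided ideal generated by
`S`, i.e. the linear span of the elements `a·s·b` with `s ∈ S`. -/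
theorem statement3 (K : Type*) [Field K] (N : ℕ) (hN : 2 ≤ N)
    (E E' : Type*) [AddCommGroup E] [Module K E] [AddCommGroup E'] [Module K E']
    [FiniteDimensional K E] [FiniteDimensional K E']
    (R : Submodule K (⨂[K]^N E)) (R' : Submodule K (⨂[K]^N E'))
    (S : Submodule K (⨂[K]^N (E ⊗[K] E')))
    (hS : S = Submodule.map (shuffle K (fun _ : Fin N => E) (fun _ : Fin N => E'))
      (LinearMap.range (LinearMap.rTensor (⨂[K]^N E') R.subtype) ⊔
        LinearMap.range (LinearMap.lTensor (⨂[K]^N E) R'.subtype))) :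
    LinearMap.ker
      (((Algebra.TensorProduct.map (homQuot K E R) (homQuot K E' R')).comp
          (tildeI K E E')).toLinearMap) =
    Submodule.span K
      {x : TensorAlgebra K (E ⊗[K] E') | ∃ a b : TensorAlgebra K (E ⊗[K] E'),
        ∃ s ∈ Submodule.map
          (TensorPower.toTensorAlgebra (R := K) (M := E ⊗[K] E') (n := N)) S,
        x = a * s * b} :=
  statement3' N hN R R' S hS
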